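/- arXiv:2509.08161 — 3 statements merged into one kernel-verified Lean document; each statement's English description precedes it below -/
import Mathlib

section
/- Let F : ℝⁿ → ℝ be differentiable with ℓ-Lipschitz gradient, bounded below by F(x*), and suppose x_{t+1} = x_t - (1/ℓ) q_t for vectors q_t. Then Σ_{t=0}^{T} (1/(4ℓ))‖∇F(x_t)‖² ≤ F(x₀) - F(x*) + (1/ℓ) Σ_{t=0}^{T} (1/4)‖q_t - ∇F(x_t)‖². -/
/-!
The descent lemma `F (u + v) ≤ F u + ⟪∇F u, v⟫ + ℓ/2 ‖v‖²`, applied to the step `v = -q_t/ℓ`,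
gives `F x_{t+1} ≤ F x_t - (‖∇F x_t‖² - ‖q_t - ∇F x_t‖²) / (2ℓ)`. Summing, the left side
telescopes and is bounded by `F x₀ - F x*`; the claim is half of this bound, weakened using
`F x₀ - F x* ≥ 0`.
-/

open Finset RealInnerProductSpace

section Descent

variable {E : Type*} [NormedAddCommGroup E] [InnerProductSpace ℝ E] [CompleteSpace E]
  {F : E → ℝ}

theorem hasDerivAt_comp_add_smul (hF : Differentiable ℝ F) (u v : E) (t : ℝ) :
    HasDerivAt (fun s : ℝ => F (u + s • v)) ⟪gradient F (u + t • v), v⟫ t := by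
  have hline : HasDerivAt (fun s : ℝ => u + s • v) v t := by
    simpa using ((hasDerivAt_id t).smul_const v).const_add u
  have := (hF (u + t • v)).hasGradientAt.hasFDerivAt.comp_hasDerivAt t hline
  rwa [InnerProductSpace.toDual_apply_apply] at this

theorem le_add_inner_gradient_add_sq {ℓ : ℝ} (hF : Differentiable ℝ F)
    (hlip : ∀ u v, ‖gradient F u - gradient F v‖ ≤ ℓ * ‖u - v‖) (u v : E) :
    F (u + v) ≤ F u + ⟪gradient F u, v⟫ + ℓ / 2 * ‖v‖ ^ 2 := by
  set B : ℝ → ℝ := fun t => F u + t * ⟪gradient F u, v⟫ + ℓ / 2 * t ^ 2 * ‖v‖ ^ 2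
  have hB : ∀ t, HasDerivAt B (⟪gradient F u, v⟫ + ℓ * t * ‖v‖ ^ 2) t := fun t =>
    ((((hasDerivAt_id t).mul_const _).const_add (F u)).add
      (((hasDerivAt_pow 2 t).const_mul (ℓ / 2)).mul_const (‖v‖ ^ 2))).congr_deriv
      (by simp only [Nat.cast_ofNat, Nat.add_one_sub_one, pow_one]; ring)
  have hslope : ∀ t, 0 ≤ t →
      ⟪gradient F (u + t • v), v⟫ ≤ ⟪gradient F u, v⟫ + ℓ * t * ‖v‖ ^ 2 := fun t ht =>
    calc ⟪gradient F (u + t • v), v⟫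
        = ⟪gradient F u, v⟫ + ⟪gradient F (u + t • v) - gradient F u, v⟫ := by
          rw [inner_sub_left]; ring
      _ ≤ ⟪gradient F u, v⟫ + ‖gradient F (u + t • v) - gradient F u‖ * ‖v‖ := by
          gcongr; exact real_inner_le_norm _ _
      _ ≤ ⟪gradient F u, v⟫ + ℓ * ‖u + t • v - u‖ * ‖v‖ := by gcongr; exact hlip _ _
      _ = ⟪gradient F u, v⟫ + ℓ * t * ‖v‖ ^ 2 := by
          rw [add_sub_cancel_left, norm_smul, Real.norm_of_nonneg ht]; ring
  have := image_le_of_deriv_right_le_deriv_boundary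
    (f := fun t => F (u + t • v)) (B := B) (a := 0) (b := 1)
    (fun t _ => (hasDerivAt_comp_add_smul hF u v t).continuousAt.continuousWithinAt)
    (fun t _ => (hasDerivAt_comp_add_smul hF u v t).hasDerivWithinAt)
    (by simp [B]) (fun t _ => (hB t).continuousAt.continuousWithinAt)
    (fun t _ => (hB t).hasDerivWithinAt) (fun t ht => hslope t ht.1)
    (Set.right_mem_Icc.2 zero_le_one)
  simpa [B] using this

theorem descent_of_approx_gradient_step {ℓ : ℝ} (hℓ : ℓ ≠ 0) (hF : Differentiable ℝ F)
    (hlip : ∀ u v, ‖gradient F u - gradient F v‖ ≤ ℓ * ‖u - v‖) (u q : E) :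
    (‖gradient F u‖ ^ 2 - ‖q - gradient F u‖ ^ 2) / (2 * ℓ) ≤ F u - F (u - (1 / ℓ) • q) := by
  have h := le_add_inner_gradient_add_sq hF hlip u (-((1 / ℓ) • q))
  rw [← sub_eq_add_neg, inner_neg_right, real_inner_smul_right, norm_neg, norm_smul,
    Real.norm_eq_abs, mul_pow, sq_abs, real_inner_comm] at h
  have hsq : (‖gradient F u‖ ^ 2 - ‖q - gradient F u‖ ^ 2) / (2 * ℓ)
      = 1 / ℓ * ⟪q, gradient F u⟫ - ℓ / 2 * ((1 / ℓ) ^ 2 * ‖q‖ ^ 2) := by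
    rw [norm_sub_sq_real]; field_simp; ring
  linarith

end Descent

/-- Summed descent: if `∇F` is `ℓ`-Lipschitz, `F` is bounded below by `F x*`, and
`x_{t+1} = x_t - (1/ℓ) q_t`, then
`Σ_{t=0}^T (1/(4ℓ))‖∇F(x_t)‖² ≤ F(x₀) - F(x*) + (1/ℓ) Σ_{t=0}^T (1/4)‖q_t - ∇F(x_t)‖²`. -/
theorem stmt_7 {n : ℕ} (F : EuclideanSpace ℝ (Fin n) → ℝ)
    (ℓ : ℝ) (hℓ : 0 < ℓ) (hdiff : Differentiable ℝ F)
    (hlip : ∀ u v : EuclideanSpace ℝ (Fin n),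
      ‖gradient F u - gradient F v‖ ≤ ℓ * ‖u - v‖)
    (xstar : EuclideanSpace ℝ (Fin n)) (hlb : ∀ x, F xstar ≤ F x)
    (x q : ℕ → EuclideanSpace ℝ (Fin n))
    (hupd : ∀ t, x (t + 1) = x t - (1 / ℓ) • q t) (T : ℕ) :
    ∑ t ∈ range (T + 1), (1 / (4 * ℓ)) * ‖gradient F (x t)‖ ^ 2 ≤
      F (x 0) - F xstar +
        (1 / ℓ) * ∑ t ∈ range (T + 1), (1 / 4) * ‖q t - gradient F (x t)‖ ^ 2 := by
  have hstep : ∀ t, (‖gradient F (x t)‖ ^ 2 - ‖q t - gradient F (x t)‖ ^ 2) / (2 * ℓ)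
      ≤ F (x t) - F (x (t + 1)) := fun t => by
    rw [hupd]; exact descent_of_approx_gradient_step hℓ.ne' hdiff hlip (x t) (q t)
  have hsum : ∑ t ∈ range (T + 1),
      (‖gradient F (x t)‖ ^ 2 - ‖q t - gradient F (x t)‖ ^ 2) / (2 * ℓ) ≤ F (x 0) - F xstar :=
    calc _ ≤ ∑ t ∈ range (T + 1), (F (x t) - F (x (t + 1))) := sum_le_sum fun t _ => hstep t
      _ = F (x 0) - F (x (T + 1)) := sum_range_sub' _ _
      _ ≤ F (x 0) - F xstar := by linarith [hlb (x (T + 1))]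
  have hhalf : ∑ t ∈ range (T + 1), (1 / (4 * ℓ)) * ‖gradient F (x t)‖ ^ 2
      - (1 / ℓ) * ∑ t ∈ range (T + 1), (1 / 4) * ‖q t - gradient F (x t)‖ ^ 2
      = (1 / 2) * ∑ t ∈ range (T + 1),
        (‖gradient F (x t)‖ ^ 2 - ‖q t - gradient F (x t)‖ ^ 2) / (2 * ℓ) := by
    rw [mul_sum, mul_sum, ← sum_sub_distrib]
    exact sum_congr rfl fun t _ => by ring
  linarith [hlb (x 0)]
end

section
/- Let g : ℝⁿ → ℝ be differentiable and μ-strongly convex with minimizer y*, and let f : ℝⁿ → ℝ be differentiable with ‖∇f(y)‖ ≤ ℓ_{f,0} for all y. For λ > 0, let y*_λ be a minimizer of f + λg, and suppose f + λg is (λμ/2)-strongly convex. Then ‖y*_λ - y*‖ ≤ 2ℓ_{f,0}/(λμ). -/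
open RealInnerProductSpace

/-- If `g` is `μ`-strongly convex with minimizer `y*`, `‖∇f‖ ≤ ℓf0` everywhere,
`y*_λ` minimizes `f + λg` (first-order condition), and `f + λg` is
`(λμ/2)`-strongly convex, then `‖y*_λ - y*‖ ≤ 2ℓf0/(λμ)`. -/
theorem stmt_13 {n : ℕ} (f g : EuclideanSpace ℝ (Fin n) → ℝ)
    (μ lam ℓf0 : ℝ) (hμ : 0 < μ) (hlam : 0 < lam) (hℓf0 : 0 ≤ ℓf0)
    (hfd : Differentiable ℝ f) (hgd : Differentiable ℝ g)
    (hgsc : ∀ u v : EuclideanSpace ℝ (Fin n),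
      μ * ‖u - v‖ ^ 2 ≤ ⟪gradient g u - gradient g v, u - v⟫)
    (hfb : ∀ y, ‖gradient f y‖ ≤ ℓf0)
    (ystar ylam : EuclideanSpace ℝ (Fin n))
    (hgmin : gradient g ystar = 0)
    (hopt : gradient f ylam + lam • gradient g ylam = 0)
    (hsc : ∀ u v : EuclideanSpace ℝ (Fin n),
      lam * μ / 2 * ‖u - v‖ ^ 2 ≤
        ⟪(gradient f u + lam • gradient g u) - (gradient f v + lam • gradient g v),
          u - v⟫) :
    ‖ylam - ystar‖ ≤ 2 * ℓf0 / (lam * μ) := by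
  set d := ylam - ystar with hd
  -- bound on ‖∇g ylam‖
  have hg_eq : lam • gradient g ylam = -gradient f ylam := by
    have := hopt
    linear_combination (norm := module) this
  have hgnorm : ‖gradient g ylam‖ ≤ ℓf0 / lam := by
    rw [le_div_iff₀ hlam]
    have h1 : ‖lam • gradient g ylam‖ = ‖-gradient f ylam‖ := by rw [hg_eq]
    rw [norm_smul, norm_neg, Real.norm_eq_abs, abs_of_pos hlam] at h1
    nlinarith [hfb ylam]
  have key : μ * ‖d‖ ^ 2 ≤ (ℓf0 / lam) * ‖d‖ := by
    calc μ * ‖d‖ ^ 2 ≤ ⟪gradient g ylam - gradient g ystar, d⟫ := hgsc ylam ystar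
      _ = ⟪gradient g ylam, d⟫ := by rw [hgmin, sub_zero]
      _ ≤ ‖gradient g ylam‖ * ‖d‖ := real_inner_le_norm _ _
      _ ≤ (ℓf0 / lam) * ‖d‖ := mul_le_mul_of_nonneg_right hgnorm (norm_nonneg _)
  have hbnd : ‖d‖ ≤ ℓf0 / (lam * μ) := by
    rw [le_div_iff₀ (by positivity)]
    rcases eq_or_lt_of_le (norm_nonneg d) with h0 | h0
    · rw [← h0, zero_mul]; exact hℓf0
    · have h2 : ℓf0 / lam * lam = ℓf0 := div_mul_cancel₀ _ hlam.ne'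
      nlinarith [key]
  calc ‖d‖ ≤ ℓf0 / (lam * μ) := hbnd
    _ ≤ 2 * ℓf0 / (lam * μ) := by gcongr; linarith
end

section
/- Triangle-type bound for changing both point and penalty: if y*_{λ₁}(x₁) and y*_{λ₂}(x₂) minimize f(x,·) + λᵢ g(x,·) at respective inputs, with f, g having ℓ_{f,1}, ℓ_{g,1}-Lipschitz gradients in x, ‖∇_x f‖ ≤ ℓ_{f,0}, the first-order optimality giving ‖∇_y g(x₁, y*_{λ₁}(x₁))‖ ≤ ℓ_{f,0}/λ₁, and f + λ₂ g being (μ_g λ₂/2)-strongly convex in y, then ‖y*_{λ₁}(x₁) - y*_{λ₂}(x₂)‖ ≤ (2/(μ_g λ₂))·(‖x₁ - x₂‖(ℓ_{f,1} + ℓ_{g,1} λ₂) + (λ₂ - λ₁)·ℓ_{f,0}/λ₁). -/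
open RealInnerProductSpace

/-- Bound on the movement of the penalized minimizer when both the leader's point
and the penalty parameter change:
`‖y*_{λ₁}(x₁) - y*_{λ₂}(x₂)‖ ≤ (2/(μg λ₂))(‖x₁-x₂‖(ℓf1 + ℓg1 λ₂) + (λ₂-λ₁) ℓf0/λ₁)`. -/
theorem stmt_17 {m n : ℕ}
    (f g : EuclideanSpace ℝ (Fin m) → EuclideanSpace ℝ (Fin n) → ℝ)
    (μg ℓf0 ℓf1 ℓg1 lam₁ lam₂ : ℝ)
    (hμg : 0 < μg) (hlam₁ : 2 * ℓf1 / μg ≤ lam₁) (hlam₁0 : 0 < lam₁)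
    (hlam : lam₁ ≤ lam₂)
    (hfd : ∀ x, Differentiable ℝ (f x)) (hgd : ∀ x, Differentiable ℝ (g x))
    (hflipx : ∀ (y : EuclideanSpace ℝ (Fin n)) (x x' : EuclideanSpace ℝ (Fin m)),
      ‖gradient (f x) y - gradient (f x') y‖ ≤ ℓf1 * ‖x - x'‖)
    (hglipx : ∀ (y : EuclideanSpace ℝ (Fin n)) (x x' : EuclideanSpace ℝ (Fin m)),
      ‖gradient (g x) y - gradient (g x') y‖ ≤ ℓg1 * ‖x - x'‖)
    (x₁ x₂ : EuclideanSpace ℝ (Fin m)) (y₁ y₂ : EuclideanSpace ℝ (Fin n))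
    -- `y₁` minimizes `f(x₁,·) + λ₁ g(x₁,·)` and `y₂` minimizes `f(x₂,·) + λ₂ g(x₂,·)`
    (hopt₁ : gradient (f x₁) y₁ + lam₁ • gradient (g x₁) y₁ = 0)
    (hopt₂ : gradient (f x₂) y₂ + lam₂ • gradient (g x₂) y₂ = 0)
    (hf0 : ‖gradient (f x₁) y₁‖ ≤ ℓf0)
    (hg0 : ‖gradient (g x₁) y₁‖ ≤ ℓf0 / lam₁)
    (hsc : ∀ u v : EuclideanSpace ℝ (Fin n),
      μg * lam₂ / 2 * ‖u - v‖ ^ 2 ≤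
        ⟪(gradient (f x₂) u + lam₂ • gradient (g x₂) u) -
          (gradient (f x₂) v + lam₂ • gradient (g x₂) v), u - v⟫) :
    ‖y₁ - y₂‖ ≤
      (2 / (μg * lam₂)) * (‖x₁ - x₂‖ * (ℓf1 + ℓg1 * lam₂) + (lam₂ - lam₁) * ℓf0 / lam₁) := by

  have hlam₂0 : 0 < lam₂ := lt_of_lt_of_le hlam₁0 hlam
  set G := gradient (f x₂) y₁ + lam₂ • gradient (g x₂) y₁ with hG
  set d := y₁ - y₂ with hd
  set S := ‖x₁ - x₂‖ * (ℓf1 + ℓg1 * lam₂) + (lam₂ - lam₁) * ℓf0 / lam₁ with hS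
  have h1 : μg * lam₂ / 2 * ‖d‖ ^ 2 ≤ ⟪G, d⟫ := by
    have := hsc y₁ y₂
    rw [hopt₂] at this
    simpa using this
  have hGdecomp : G = (gradient (f x₂) y₁ - gradient (f x₁) y₁)
      + lam₂ • (gradient (g x₂) y₁ - gradient (g x₁) y₁)
      + (lam₂ - lam₁) • gradient (g x₁) y₁ := by
    have h1' : gradient (f x₁) y₁ = -(lam₁ • gradient (g x₁) y₁) := by
      have := hopt₁; linear_combination (norm := module) this
    rw [hG, h1']
    module
  have hGS : ‖G‖ ≤ S := by
    rw [hGdecomp]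
    have t1 : ‖gradient (f x₂) y₁ - gradient (f x₁) y₁‖ ≤ ℓf1 * ‖x₁ - x₂‖ := by
      have := hflipx y₁ x₂ x₁
      rwa [norm_sub_rev x₂ x₁] at this
    have t2 : ‖lam₂ • (gradient (g x₂) y₁ - gradient (g x₁) y₁)‖ ≤ lam₂ * (ℓg1 * ‖x₁ - x₂‖) := by
      rw [norm_smul, Real.norm_eq_abs, abs_of_pos hlam₂0]
      have := hglipx y₁ x₂ x₁
      rw [norm_sub_rev x₂ x₁] at this
      exact mul_le_mul_of_nonneg_left this hlam₂0.le
    have t3 : ‖(lam₂ - lam₁) • gradient (g x₁) y₁‖ ≤ (lam₂ - lam₁) * (ℓf0 / lam₁) := by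
      rw [norm_smul, Real.norm_eq_abs, abs_of_nonneg (by linarith)]
      exact mul_le_mul_of_nonneg_left hg0 (by linarith)
    calc _ ≤ _ + _ + _ := norm_add₃_le
      _ ≤ ℓf1 * ‖x₁ - x₂‖ + lam₂ * (ℓg1 * ‖x₁ - x₂‖) + (lam₂ - lam₁) * (ℓf0 / lam₁) := by
          gcongr
      _ = S := by rw [hS]; ring
  have hS0 : 0 ≤ S := le_trans (norm_nonneg G) hGS
  have h2 : μg * lam₂ / 2 * ‖d‖ ^ 2 ≤ S * ‖d‖ := by
    calc μg * lam₂ / 2 * ‖d‖ ^ 2 ≤ ⟪G, d⟫ := h1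
      _ ≤ ‖G‖ * ‖d‖ := real_inner_le_norm G d
      _ ≤ S * ‖d‖ := mul_le_mul_of_nonneg_right hGS (norm_nonneg d)
  rcases eq_or_lt_of_le (norm_nonneg d) with h0 | h0
  · rw [← h0]
    positivity
  · have hμl : 0 < μg * lam₂ := by positivity
    rw [div_mul_eq_mul_div, le_div_iff₀ hμl]
    have h3 : μg * lam₂ / 2 * ‖d‖ ≤ S :=
      le_of_mul_le_mul_right (by nlinarith [h2]) h0
    calc ‖d‖ * (μg * lam₂) = 2 * (μg * lam₂ / 2 * ‖d‖) := by ring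
      _ ≤ 2 * S := by linarith
end
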